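/- arXiv:1403.6210 — 4 statements merged into one kernel-verified Lean document; each statement's English description precedes it below -/
import Mathlib

section
/- The number of times the letter S appears in the {S,D}-word representing a threshold graph T equals the clique number of T (the largest cardinality of a clique in T). -/
open Finset

/-- Number of cliques of `G` with exactly `i` vertices. -/
noncomputable def cliqueCount {V : Type*} (G : SimpleGraph V) (i : ℕ) : ℕ :=
  {s : Finset V | G.IsNClique i s}.ncard

/-- Clique number: the largest cardinality of a clique of `G`. -/
noncomputable def cliqueNum {V : Type*} (G : SimpleGraph V) : ℕ :=
  sSup {i : ℕ | ∃ s : Finset V, G.IsNClique i s}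

/-- `G` is `k`-connected: it has at least `k` vertices and removing any set of
fewer than `k` vertices leaves a connected graph. -/
def KConnected {V : Type*} [Fintype V] (G : SimpleGraph V) (k : ℕ) : Prop :=
  k ≤ Fintype.card V ∧
    ∀ s : Finset V, s.card < k → (G.induce ((↑s : Set V)ᶜ)).Connected

/-- The connectivity number `κ(G)`: the largest `k` such that `G` is `k`-connected. -/
noncomputable def connectivityNum {V : Type*} [Fintype V] (G : SimpleGraph V) : ℕ :=
  sSup {k : ℕ | KConnected G k}

/-- A graph is chordal if every cycle of length at least four has a chord. -/
def IsChordal {V : Type*} (G : SimpleGraph V) : Prop :=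
  ∀ (v : V) (c : G.Walk v v), c.IsCycle → 4 ≤ c.length →
    ∃ u w, u ∈ c.support ∧ w ∈ c.support ∧ G.Adj u w ∧ s(u, w) ∉ c.edges

/-- The threshold graph built from a word in the alphabet `{S, D}` (here
`true` = `S`, `false` = `D`), where the leftmost letter is the last operation
performed.  Vertex `i` corresponds to the `i`-th letter; two vertices are
adjacent iff the earlier (smaller-index, i.e. later-added) one is a dominating
vertex. -/
def thresholdGraph (w : List Bool) : SimpleGraph (Fin w.length) where
  Adj i j := i ≠ j ∧ w.get (min i j) = true
  symm := ⟨fun i j h => ⟨h.1.symm, by rw [min_comm]; exact h.2⟩⟩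
  loopless := ⟨fun i h => h.1 rfl⟩

/-- A valid threshold word: the final (rightmost) letter, i.e. the first
operation performed, is `S`. -/
def IsThresholdWord (w : List Bool) : Prop := w ≠ [] → w.getLast? = some true

/-- A graph is a threshold graph if it is isomorphic to the graph of some
threshold word. -/
def IsThresholdGraph {V : Type*} (G : SimpleGraph V) : Prop :=
  ∃ w : List Bool, IsThresholdWord w ∧ Nonempty (G ≃g thresholdGraph w)

/-- An abstract simplicial complex on vertex set `V`. -/
structure AbsCx (V : Type*) where
  faces : Set (Finset V)
  down_closed : ∀ ⦃s t : Finset V⦄, s ∈ faces → t ⊆ s → t ∈ faces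

/-- The clique complex of a graph: its faces are the cliques. -/
def cliqueComplex {V : Type*} (G : SimpleGraph V) : AbsCx V :=
  ⟨{s | G.IsClique (↑s : Set V)}, fun s t hs hts => hs.subset (Finset.coe_subset.mpr hts)⟩

/-- The induced subcomplex on a vertex subset `W`. -/
def AbsCx.restrict {V : Type*} (K : AbsCx V) (W : Set V) : AbsCx V :=
  ⟨{s | s ∈ K.faces ∧ (↑s : Set V) ⊆ W},
   fun s t hs hts =>
     ⟨K.down_closed hs.1 hts, le_trans (Finset.coe_subset.mpr hts) hs.2⟩⟩

/-- A complex is flag if every minimal non-face has exactly two elements. -/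
def AbsCx.IsFlag {V : Type*} (K : AbsCx V) : Prop :=
  ∀ s : Finset V, s ∉ K.faces → (∀ t ⊂ s, t ∈ K.faces) → s.card = 2

/-- A complex on `Fin n` is shifted if exchanging a vertex of a face by a
smaller vertex not in the face again yields a face. -/
def AbsCx.IsShifted {n : ℕ} (K : AbsCx (Fin n)) : Prop :=
  ∀ s ∈ K.faces, ∀ i ∈ s, ∀ j, j ∉ s → j < i → insert j (s.erase i) ∈ K.faces

/-- Faces of (integer) dimension `d`, i.e. of cardinality `d + 1`. -/
def AbsCx.dimFaces {V : Type*} (K : AbsCx V) (d : ℤ) : Type _ :=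
  {s : Finset V // s ∈ K.faces ∧ (s.card : ℤ) = d + 1}

/-- The simplicial (augmented) boundary map of a complex, on `d`-dimensional
chains with coefficients in `𝕜`. -/
noncomputable def chainBoundary {V : Type*} [LinearOrder V] (K : AbsCx V)
    (𝕜 : Type*) [Field 𝕜] (d : ℤ) :
    (K.dimFaces d →₀ 𝕜) →ₗ[𝕜] (K.dimFaces (d - 1) →₀ 𝕜) :=
  Finsupp.lsum 𝕜 fun F =>
    LinearMap.toSpanSingleton 𝕜 _
      (∑ v ∈ F.1.attach,
        ((-1 : 𝕜) ^ (F.1.filter (fun x => x < v.1)).card) •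
          Finsupp.single
            (⟨F.1.erase v.1,
              K.down_closed F.2.1 (Finset.erase_subset _ _),
              by
                obtain ⟨hf, hc⟩ := F.2
                have h1 : 1 ≤ F.1.card := Finset.card_pos.mpr ⟨v.1, v.2⟩
                rw [Finset.card_erase_of_mem v.2, Nat.cast_sub h1]
                omega⟩ : K.dimFaces (d - 1))
            (1 : 𝕜))

/-- The dimension of the `d`-th reduced simplicial homology of `K` with
coefficients in `𝕜` (computed as `dim ker ∂_d − dim im ∂_{d+1}`). -/
noncomputable def AbsCx.homDim {V : Type*} [LinearOrder V] (𝕜 : Type*) [Field 𝕜]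
    (K : AbsCx V) (d : ℤ) : ℕ :=
  Module.finrank 𝕜 (LinearMap.ker (chainBoundary K 𝕜 d)) -
    Module.finrank 𝕜 (LinearMap.range (chainBoundary K 𝕜 (d + 1)))

/-- The graded Betti numbers `β_{i,j}` of the Stanley–Reisner ring `𝕜[K]`,
given by Hochster's formula: `β_{i,j} = Σ_{|W| = j} dim_𝕜 H̃_{j-i-1}(K_W)`. -/
noncomputable def srBetti (𝕜 : Type*) [Field 𝕜] {n : ℕ} (K : AbsCx (Fin n))
    (i j : ℕ) : ℕ :=
  ∑ W ∈ Finset.powersetCard j (Finset.univ : Finset (Fin n)),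
    AbsCx.homDim 𝕜 (K.restrict (↑W : Set (Fin n))) ((j : ℤ) - i - 1)

/-- The projective dimension of the Stanley–Reisner ring `𝕜[K]` over the
polynomial ring: the largest homological degree with a nonzero Betti number. -/
noncomputable def srProjDim (𝕜 : Type*) [Field 𝕜] {n : ℕ} (K : AbsCx (Fin n)) : ℕ :=
  sSup {i : ℕ | ∃ j : ℕ, srBetti 𝕜 K i j ≠ 0}

/-- The depth of the Stanley–Reisner ring `𝕜[K]`, via the
Auslander–Buchsbaum formula `depth = n − projdim`. -/
noncomputable def srDepth (𝕜 : Type*) [Field 𝕜] {n : ℕ} (K : AbsCx (Fin n)) : ℕ :=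
  n - srProjDim 𝕜 K

/-- The lengths of the blocks obtained by splitting a threshold word
immediately after each `S` (= `true`); the `b`-vector of the word. -/
def blocks : List Bool → List ℕ
  | [] => []
  | true :: rest => 1 :: blocks rest
  | false :: rest =>
    match blocks rest with
    | [] => []
    | b :: bs => (b + 1) :: bs

/-- One plus the dimension of a complex: the largest cardinality of a face. -/
noncomputable def AbsCx.dimPlusOne {V : Type*} (K : AbsCx V) : ℕ :=
  sSup {c : ℕ | ∃ s ∈ K.faces, s.card = c}

/-- `K` is Cohen–Macaulay over `𝕜` iff the depth of `𝕜[K]` equals its Krull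
dimension `dim K + 1`. -/
def IsCohenMacaulay (𝕜 : Type*) [Field 𝕜] {n : ℕ} (K : AbsCx (Fin n)) : Prop :=
  srDepth 𝕜 K = K.dimPlusOne

/-- The Alexander dual complex. -/
def AbsCx.dual {n : ℕ} (K : AbsCx (Fin n)) : AbsCx (Fin n) :=
  ⟨{s | Finset.univ \ s ∉ K.faces},
   fun s t hs hts h => hs (K.down_closed h (Finset.sdiff_subset_sdiff (le_refl _) hts))⟩

/-- The number of faces of `K` with exactly `i` vertices (the `f`-vector). -/
noncomputable def AbsCx.faceCount {V : Type*} (K : AbsCx V) (i : ℕ) : ℕ :=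
  {s ∈ K.faces | s.card = i}.ncard

namespace thresholdGraph

variable {w : List Bool}

theorem adj_of_lt {i j : Fin w.length} (hij : i < j) :
    (thresholdGraph w).Adj i j ↔ w.get i = true := by
  change i ≠ j ∧ w.get (min i j) = true ↔ _
  rw [min_eq_left hij.le]
  exact and_iff_right hij.ne

/-- The vertices added by an `S` operation. -/
def dominating (w : List Bool) : Finset (Fin w.length) :=
  {i | w.get i = true}

theorem mem_dominating {i : Fin w.length} : i ∈ dominating w ↔ w.get i = true := by
  simp [dominating]

theorem card_dominating (w : List Bool) : #(dominating w) = w.count true := by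
  induction w with
  | nil => rfl
  | cons a t ih =>
    simp only [dominating, List.get_eq_getElem] at ih
    rw [dominating, card_filter]
    simp only [List.length_cons, Fin.sum_univ_succ, List.count_cons]
    cases a <;> simp [← ih, add_comm]

theorem isClique_dominating (w : List Bool) :
    (thresholdGraph w).IsClique (dominating w : Set (Fin w.length)) := by
  intro i hi j hj hij
  rcases hij.lt_or_gt with h | h
  · exact (adj_of_lt h).2 (mem_dominating.1 hi)
  · exact ((adj_of_lt h).2 (mem_dominating.1 hj)).symm

theorem exists_mem_dominating_le (hw : IsThresholdWord w) (i : Fin w.length) :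
    ∃ j ∈ dominating w, i ≤ j := by
  have hlen : w.length - 1 < w.length := Nat.sub_one_lt_of_lt i.isLt
  have hlast : w[w.length - 1] = true := by
    simpa [List.getLast?_eq_getElem?, hlen] using hw (List.ne_nil_of_length_pos i.pos)
  exact ⟨⟨w.length - 1, hlen⟩, mem_dominating.2 hlast, Fin.le_def.2 (Nat.le_sub_one_of_lt i.isLt)⟩

/-- All vertices of a clique below its largest one `m` are dominating, and the dominating
vertices below `m` miss at least the last vertex of the word. -/
theorem card_le_card_dominating_of_isClique (hw : IsThresholdWord w) {s : Finset (Fin w.length)}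
    (hs : (thresholdGraph w).IsClique (s : Set (Fin w.length))) : #s ≤ #(dominating w) := by
  rcases s.eq_empty_or_nonempty with rfl | hne
  · simp
  set m := s.max' hne
  have hsub : s ⊆ insert m {i ∈ dominating w | i < m} := by
    intro i hi
    rcases (s.le_max' i hi).lt_or_eq with hlt | heq
    · exact mem_insert_of_mem <| mem_filter.2
        ⟨mem_dominating.2 <| (adj_of_lt hlt).1 (hs hi (s.max'_mem hne) hlt.ne), hlt⟩
    · exact heq ▸ mem_insert_self _ _
  obtain ⟨j, hj, hmj⟩ := exists_mem_dominating_le hw m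
  have hlower : {i ∈ dominating w | i < m} ⊂ dominating w :=
    filter_ssubset.2 ⟨j, hj, hmj.not_gt⟩
  calc #s ≤ #{i ∈ dominating w | i < m} + 1 := (card_le_card hsub).trans (card_insert_le _ _)
    _ ≤ #(dominating w) := card_lt_card hlower

end thresholdGraph

/-- the number of `S`'s in the word of a threshold graph equals
its clique number. -/
theorem count_S_eq_cliqueNum (w : List Bool) (hw : IsThresholdWord w) :
    w.count true = cliqueNum (thresholdGraph w) := by
  have hgreatest : IsGreatest {i | ∃ s, (thresholdGraph w).IsNClique i s} (w.count true) :=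
    ⟨⟨_, thresholdGraph.isClique_dominating w, thresholdGraph.card_dominating w⟩, fun _ ⟨s, hs⟩ =>
      hs.card_eq ▸ thresholdGraph.card_dominating w ▸
        thresholdGraph.card_le_card_dominating_of_isClique hw hs.isClique⟩
  exact hgreatest.csSup_eq.symm
end

section
/- A threshold graph T with word w in the alphabet {S,D} is k-connected if and only if no D occurs among the first k letters of w. -/
open Finset

/-! If the first `k` letters are all `S`, a set of fewer than `k` removed vertices misses one
of the first `k` vertices, and that vertex is adjacent to every other vertex, so what is left
is connected. Conversely, if letter `i < k` is `D`, removing the `i` vertices before it leaves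
vertex `i` with no neighbours; it is not alone, since the last letter of a threshold word is `S`. -/

namespace SimpleGraph

variable {V : Type*} {G : SimpleGraph V} {v : V}

theorem IsUniversal.induce (h : G.IsUniversal v) {s : Set V} (hv : v ∈ s) :
    (G.induce s).IsUniversal ⟨v, hv⟩ :=
  fun _ hne => h (Subtype.coe_ne_coe.mpr hne)

end SimpleGraph

theorem Fin.exists_lt_notMem_of_card_lt {n k : ℕ} (hk : k ≤ n) {s : Finset (Fin n)}
    (hs : s.card < k) : ∃ m : Fin n, (m : ℕ) < k ∧ m ∉ s := by
  obtain ⟨m, hm, hms⟩ := Finset.exists_mem_notMem_of_card_lt_card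
    (t := (Finset.univ : Finset (Fin k)).map (Fin.castLEEmb hk)) (by simpa using hs)
  obtain ⟨a, -, rfl⟩ := Finset.mem_map.mp hm
  exact ⟨_, a.isLt, hms⟩

section

variable {w : List Bool}

theorem IsThresholdWord.exists_gt_of_get_eq_false (hw : IsThresholdWord w)
    {i : Fin w.length} (hi : w.get i = false) : ∃ j, i < j := by
  have hlast := hw (List.ne_nil_of_length_pos i.pos)
  rw [List.getLast?_eq_getElem?] at hlast
  refine ⟨⟨w.length - 1, Nat.sub_lt i.pos one_pos⟩, Fin.lt_def.mpr ?_⟩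
  show (i : ℕ) < w.length - 1
  by_contra! h
  have hi_last : w.length - 1 = i := by omega
  simp_all

theorem thresholdGraph_isUniversal {m : Fin w.length} (h : ∀ j ≤ m, w.get j = true) :
    (thresholdGraph w).IsUniversal m :=
  fun _ hne => ⟨hne, h _ (min_le_left _ _)⟩

theorem thresholdGraph_induce_isIsolated {i : Fin w.length} (hi : w.get i = false)
    {s : Set (Fin w.length)} (hs : ∀ j ∈ s, i ≤ j) (his : i ∈ s) :
    ((thresholdGraph w).induce s).IsIsolated ⟨i, his⟩ := by
  rintro ⟨j, hj⟩ ⟨-, hadj⟩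
  simp_all

theorem thresholdGraph_kConnected_of_forall_get {k : ℕ} (hk : k ≤ w.length)
    (h : ∀ i : Fin w.length, (i : ℕ) < k → w.get i = true) :
    KConnected (thresholdGraph w) k := by
  refine ⟨by simpa using hk, fun s hs => ?_⟩
  obtain ⟨m, hmk, hms⟩ := Fin.exists_lt_notMem_of_card_lt hk hs
  have hm : m ∈ (↑s : Set (Fin w.length))ᶜ := hms
  exact .of_isUniversal <| (thresholdGraph_isUniversal fun j hj => h j (by omega)).induce hm

theorem IsThresholdWord.get_eq_true_of_kConnected (hw : IsThresholdWord w) {k : ℕ}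
    (hG : KConnected (thresholdGraph w) k) (i : Fin w.length) (hik : (i : ℕ) < k) :
    w.get i = true := by
  by_contra hi
  rw [Bool.not_eq_true] at hi
  obtain ⟨j, hij⟩ := hw.exists_gt_of_get_eq_false hi
  have hmem : ∀ l ∈ (↑(Finset.Iio i) : Set (Fin w.length))ᶜ, i ≤ l := by simp
  have hconn := hG.2 (Finset.Iio i) (by simpa using hik)
  have : Nontrivial ((↑(Finset.Iio i) : Set (Fin w.length))ᶜ : Set _) :=
    Set.nontrivial_coe_sort.mpr ⟨i, by simp, j, by simp [hij.le], hij.ne⟩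
  exact hconn.preconnected.not_isIsolated _ (thresholdGraph_induce_isIsolated hi hmem (by simp))

end

/-- a threshold graph with word `w` is `k`-connected iff no `D`
occurs among the first `k` letters of `w`. -/
theorem threshold_kConnected_iff (w : List Bool) (hw : IsThresholdWord w)
    (k : ℕ) (hk : k ≤ w.length) :
    KConnected (thresholdGraph w) k ↔
      ∀ i : Fin w.length, (i : ℕ) < k → w.get i = true :=
  ⟨hw.get_eq_true_of_kConnected, thresholdGraph_kConnected_of_forall_get hk⟩
end

section
/- Let T be a threshold graph with clique number d, and let b_i be the length of the i-th block when the word of T is split immediately after each occurrence of S. Then the clique vector (c_1,…,c_d) of T satisfies Σ_{i=1}^d b_i·(x+1)^{i-1} = Σ_{i=1}^d c_i·x^{i-1} as polynomials in x. -/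
open Finset

/-! In the threshold graph of `w`, an `S`-vertex is adjacent to every vertex to its right, so a
clique is its rightmost vertex `v` together with an arbitrary set of `S`-vertices to the left of
`v`. If `p_v` is the number of those, i.e. `v` lies in block `p_v`, this gives
`c_{k+1} = ∑_v C(p_v, k)`, hence `∑_k c_{k+1} x^k = ∑_v (x+1)^{p_v}`, and grouping the vertices
by block turns the right-hand side into `∑_i b_i (x+1)^i`. Every `p_v + 1` is the size of a
clique, so both sums may be cut off at the clique number. -/

open Polynomial

section Algebra

variable {ι R : Type*} [CommSemiring R]

theorem sum_card_fiber_mul_pow (s : Finset ι) (f : ι → ℕ) (x : R) {N : ℕ}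
    (hf : ∀ i ∈ s, f i < N) :
    ∑ j ∈ range N, (#{i ∈ s | f i = j} : R) * x ^ j = ∑ i ∈ s, x ^ f i := by
  classical
  rw [← sum_fiberwise_of_maps_to (fun i hi => mem_range.mpr (hf i hi))]
  refine sum_congr rfl fun j _ => ?_
  rw [sum_congr rfl fun i hi => by rw [(mem_filter.mp hi).2], sum_const, nsmul_eq_mul]

theorem add_one_pow_eq_sum_range (x : R) {m N : ℕ} (hm : m < N) :
    (x + 1) ^ m = ∑ i ∈ range N, (m.choose i : R) * x ^ i := by
  rw [add_pow, sum_subset (range_subset_range.mpr hm)]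
  · exact sum_congr rfl fun i _ => by rw [one_pow, mul_one, mul_comm]
  · intro i _ hi
    rw [Nat.choose_eq_zero_of_lt (by simpa using hi), Nat.cast_zero, mul_zero]

end Algebra

theorem card_filter_univ_cons {α : Type*} (a : α) (w : List α) (p : Fin (a :: w).length → Prop)
    [DecidablePred p] :
    #{v | p v} = (if p 0 then 1 else 0) + #{v : Fin w.length | p v.succ} :=
  Fin.card_filter_univ_succ' (n := w.length) p

theorem IsThresholdWord.of_cons {a : Bool} {w : List Bool} (h : IsThresholdWord (a :: w)) :
    IsThresholdWord w := fun hw => by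
  simpa [List.getLast?_cons, List.getLast?_eq_getLast_of_ne_nil hw] using h (List.cons_ne_nil a w)

theorem IsThresholdWord.ne_nil_of_false_cons {w : List Bool} (h : IsThresholdWord (false :: w)) :
    w ≠ [] := by
  rintro rfl
  simpa using h (List.cons_ne_nil false [])

/-- The `S`-positions to the left of `v`; their number is the index of the block containing `v`. -/
def sVerticesBelow (w : List Bool) (v : Fin w.length) : Finset (Fin w.length) :=
  {u | u < v ∧ w.get u = true}

theorem mem_sVerticesBelow {w : List Bool} {u v : Fin w.length} :
    u ∈ sVerticesBelow w v ↔ u < v ∧ w.get u = true := by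
  simp [sVerticesBelow]

theorem self_notMem_sVerticesBelow {w : List Bool} (v : Fin w.length) :
    v ∉ sVerticesBelow w v := fun h => (mem_sVerticesBelow.mp h).1.false

theorem le_of_mem_insert_of_subset_sVerticesBelow {w : List Bool} {u v : Fin w.length}
    {r : Finset (Fin w.length)} (hr : r ⊆ sVerticesBelow w v) (hu : u ∈ insert v r) : u ≤ v := by
  rcases mem_insert.mp hu with rfl | hu
  exacts [le_rfl, (mem_sVerticesBelow.mp (hr hu)).1.le]

theorem card_sVerticesBelow_zero (a : Bool) (w : List Bool) :
    #(sVerticesBelow (a :: w) 0) = 0 := by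
  simp [sVerticesBelow]

theorem card_sVerticesBelow_succ (a : Bool) (w : List Bool) (v : Fin w.length) :
    #(sVerticesBelow (a :: w) v.succ) = #(sVerticesBelow w v) + a.toNat := by
  rw [sVerticesBelow, card_filter_univ_cons]
  cases a <;> simp [sVerticesBelow, add_comm]

theorem blocks_getD_eq_card {w : List Bool} (hw : IsThresholdWord w) (i : ℕ) :
    (blocks w).getD i 0 = #{v | #(sVerticesBelow w v) = i} := by
  induction w generalizing i with
  | nil => simp [blocks]
  | cons a w ih =>
    have ih := ih hw.of_cons
    rw [card_filter_univ_cons]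
    simp only [card_sVerticesBelow_zero, card_sVerticesBelow_succ]
    cases a with
    | true =>
      cases i <;> simp only [blocks, List.getD_cons_zero, List.getD_cons_succ, ih] <;> simp
    | false =>
      -- position `0` of the nonempty word `w` lies in block `0`
      obtain ⟨b, bs, hb⟩ : ∃ b bs, blocks w = b :: bs := by
        obtain ⟨c, w', rfl⟩ := List.exists_cons_of_ne_nil hw.ne_nil_of_false_cons
        have h0 := ih 0
        rw [card_filter_univ_cons, card_sVerticesBelow_zero] at h0
        cases h : blocks (c :: w') with
        | nil => simp only [h, List.getD_nil, if_pos] at h0; omega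
        | cons b bs => exact ⟨b, bs, rfl⟩
      simp only [Bool.toNat_false, add_zero, ← ih, blocks, hb]
      cases i <;> simp [add_comm]

theorem thresholdGraph_adj_of_lt {w : List Bool} {u v : Fin w.length} (h : u < v) :
    (thresholdGraph w).Adj u v ↔ w.get u = true := by
  change u ≠ v ∧ w.get (min u v) = true ↔ _
  rw [min_eq_left h.le, and_iff_right h.ne]

theorem thresholdGraph_isClique_iff {w : List Bool} {s : Finset (Fin w.length)} :
    (thresholdGraph w).IsClique (s : Set (Fin w.length)) ↔
      ∀ u ∈ s, ∀ v ∈ s, u < v → w.get u = true := by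
  refine ⟨fun h u hu v hv huv => (thresholdGraph_adj_of_lt huv).mp (h hu hv huv.ne),
    fun h u hu v hv huv => ?_⟩
  rcases huv.lt_or_gt with huv | hvu
  · exact (thresholdGraph_adj_of_lt huv).mpr (h u hu v hv huv)
  · exact ((thresholdGraph_adj_of_lt hvu).mpr (h v hv u hu hvu)).symm

theorem isNClique_insert_of_subset_sVerticesBelow {w : List Bool} {v : Fin w.length}
    {r : Finset (Fin w.length)} (hr : r ⊆ sVerticesBelow w v) :
    (thresholdGraph w).IsNClique (#r + 1) (insert v r) := by
  refine ⟨thresholdGraph_isClique_iff.mpr fun a ha b hb hab => ?_,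
    card_insert_of_notMem fun hv => self_notMem_sVerticesBelow v (hr hv)⟩
  rcases mem_insert.mp ha with rfl | ha
  · exact ((hab.trans_le (le_of_mem_insert_of_subset_sVerticesBelow hr hb)).false).elim
  · exact (mem_sVerticesBelow.mp (hr ha)).2

theorem cliqueCount_eq_card_cliqueFinset {V : Type*} [Fintype V] [DecidableEq V]
    (G : SimpleGraph V) [DecidableRel G.Adj] (n : ℕ) :
    cliqueCount G n = #(G.cliqueFinset n) := by
  rw [cliqueCount, ← Set.ncard_coe_finset, SimpleGraph.coe_cliqueFinset]
  rfl

theorem cliqueCount_thresholdGraph_succ (w : List Bool) (k : ℕ) :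
    cliqueCount (thresholdGraph w) (k + 1) = ∑ v, (#(sVerticesBelow w v)).choose k := by
  classical
  simp_rw [cliqueCount_eq_card_cliqueFinset, ← card_powersetCard]
  rw [← card_sigma]
  symm
  refine card_bij (fun p _ => insert p.1 p.2) ?_ ?_ ?_
  · rintro ⟨v, r⟩ hp
    simp only [mem_sigma, mem_univ, true_and, mem_powersetCard] at hp
    rw [SimpleGraph.mem_cliqueFinset_iff, ← hp.2]
    exact isNClique_insert_of_subset_sVerticesBelow hp.1
  · rintro ⟨v, r⟩ hp ⟨v', r'⟩ hp' h
    simp only [mem_sigma, mem_univ, true_and, mem_powersetCard] at hp hp' h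
    obtain rfl : v = v' := le_antisymm
      (le_of_mem_insert_of_subset_sVerticesBelow hp'.1 (h ▸ mem_insert_self v r))
      (le_of_mem_insert_of_subset_sVerticesBelow hp.1 (h ▸ mem_insert_self v' r'))
    rw [← erase_insert fun hv => self_notMem_sVerticesBelow v (hp.1 hv),
      ← erase_insert fun hv => self_notMem_sVerticesBelow v (hp'.1 hv), h]
  · intro s hs
    rw [SimpleGraph.mem_cliqueFinset_iff] at hs
    have hne : s.Nonempty := by
      rw [← card_pos, hs.card_eq]
      omega
    refine ⟨⟨s.max' hne, s.erase (s.max' hne)⟩, ?_, insert_erase (s.max'_mem hne)⟩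
    simp only [mem_sigma, mem_univ, true_and, mem_powersetCard]
    refine ⟨fun u hu => mem_sVerticesBelow.mpr ?_, by
      rw [card_erase_of_mem (s.max'_mem hne), hs.card_eq, Nat.add_sub_cancel]⟩
    have hlt := lt_of_le_of_ne (s.le_max' u (mem_of_mem_erase hu)) (ne_of_mem_erase hu)
    exact ⟨hlt, thresholdGraph_isClique_iff.mp hs.isClique u (mem_of_mem_erase hu) _
      (s.max'_mem hne) hlt⟩

theorem card_sVerticesBelow_lt_cliqueNum (w : List Bool) (v : Fin w.length) :
    #(sVerticesBelow w v) < cliqueNum (thresholdGraph w) := by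
  have hbdd : BddAbove {i | ∃ s : Finset (Fin w.length), (thresholdGraph w).IsNClique i s} :=
    ⟨w.length, fun i ⟨s, hs⟩ => hs.card_eq ▸ (card_le_univ s).trans_eq (Fintype.card_fin _)⟩
  exact le_csSup hbdd ⟨_, isNClique_insert_of_subset_sVerticesBelow subset_rfl⟩

/-- if `b` is the vector of block lengths of the word of a
threshold graph `T` with clique number `d`, then
`Σ_{i=1}^d b_i (x+1)^{i-1} = Σ_{i=1}^d c_i x^{i-1}`. -/
theorem bVector_cliqueVector (w : List Bool) (hw : IsThresholdWord w) :
    ∑ i ∈ Finset.range (cliqueNum (thresholdGraph w)),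
        ((blocks w).getD i 0 : Polynomial ℤ) * (Polynomial.X + 1) ^ i =
      ∑ i ∈ Finset.range (cliqueNum (thresholdGraph w)),
        (cliqueCount (thresholdGraph w) (i + 1) : Polynomial ℤ) * Polynomial.X ^ i := by
  set N := cliqueNum (thresholdGraph w)
  have hN (v : Fin w.length) (_ : v ∈ univ) : #(sVerticesBelow w v) < N :=
    card_sVerticesBelow_lt_cliqueNum w v
  calc _ = ∑ i ∈ range N, (#{v | #(sVerticesBelow w v) = i} : ℤ[X]) * (X + 1) ^ i := by
          simp_rw [blocks_getD_eq_card hw]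
    _ = ∑ v, (X + 1) ^ #(sVerticesBelow w v) := sum_card_fiber_mul_pow _ _ _ hN
    _ = ∑ v, ∑ i ∈ range N, ((#(sVerticesBelow w v)).choose i : ℤ[X]) * X ^ i :=
          sum_congr rfl fun v hv => add_one_pow_eq_sum_range _ (hN v hv)
    _ = _ := by
          rw [sum_comm]
          simp_rw [cliqueCount_thresholdGraph_succ, Nat.cast_sum, sum_mul]
end

section
/- For any graph G, depth(𝕜[Δ(G)]) ≤ κ(G) + 1, where κ(G) is the connectivity number of G and 𝕜 is a field of characteristic zero. -/
open Finset

/-!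
If `n ≤ κ(G) + 1` the bound is trivial, since `depth 𝕜[Δ(G)] ≤ n`. Otherwise `G` is not
`(κ(G) + 1)`-connected, so deleting some set `S` of at most `κ(G)` vertices disconnects it. The
induced subcomplex `Δ(G)_W` on the remaining vertices `W` is then disconnected, so
`H̃₀(Δ(G)_W) ≠ 0`, and by Hochster's formula `β_{|W|-1,|W|} ≠ 0`. Hence `projdim ≥ |W| - 1`, and
Auslander–Buchsbaum gives `depth ≤ n - |W| + 1 = |S| + 1 ≤ κ(G) + 1`.
-/

theorem Finset.sum_pair_neg_one_pow_smul {α R M : Type*} [LinearOrder α] [Ring R]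
    [AddCommGroup M] [Module R M] {a b : α} (hab : a < b) (h : α → M) :
    ∑ v ∈ {a, b}, (-1 : R) ^ #{y ∈ {a, b} | y < v} • h v = h a - h b := by
  rw [Finset.sum_pair hab.ne]
  simp [Finset.filter_insert, Finset.filter_singleton, hab, hab.not_gt, sub_eq_add_neg]

namespace AbsCx

variable {V : Type*} (K : AbsCx V)

instance [Finite V] (d : ℤ) : Finite (K.dimFaces d) := by
  unfold AbsCx.dimFaces; infer_instance

theorem isEmpty_dimFaces_of_lt_neg_one {d : ℤ} (hd : d < -1) : IsEmpty (K.dimFaces d) :=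
  ⟨fun ⟨_, _, hs⟩ => by omega⟩

theorem subsingleton_dimFaces_neg_one : Subsingleton (K.dimFaces (0 - 1)) :=
  ⟨fun ⟨s, _, hs⟩ ⟨t, _, ht⟩ => Subtype.ext (show s = t from
    (Finset.card_eq_zero.mp (by omega : #s = 0)).trans (Finset.card_eq_zero.mp (by omega)).symm)⟩

variable [LinearOrder V] {𝕜 : Type*} [Field 𝕜]

theorem linearCombination_chainBoundary_single {M : Type*} [AddCommGroup M] [Module 𝕜 M]
    (g : Finset V → M) {d : ℤ} (F : K.dimFaces d) (c : 𝕜) :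
    Finsupp.linearCombination 𝕜 (fun E : K.dimFaces (d - 1) => g E.1)
        (chainBoundary K 𝕜 d (Finsupp.single F c)) =
      c • ∑ v ∈ F.1, (-1 : 𝕜) ^ #{y ∈ F.1 | y < v} • g (F.1.erase v) := by
  rw [chainBoundary, Finsupp.lsum_single, LinearMap.toSpanSingleton_apply, map_smul]
  erw [map_sum]
  congr 1
  rw [← Finset.sum_attach F.1 fun v => (-1 : 𝕜) ^ #{y ∈ F.1 | y < v} • g (F.1.erase v)]
  refine Finset.sum_congr rfl fun v _ => ?_
  erw [map_smul, Finsupp.linearCombination_single, one_smul]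

theorem chainBoundary_zero_eq_smulRight (E : K.dimFaces (0 - 1)) :
    chainBoundary K 𝕜 0 =
      (Finsupp.linearCombination 𝕜 fun _ => (1 : 𝕜)).smulRight (Finsupp.single E 1) := by
  have := K.subsingleton_dimFaces_neg_one
  have hid : ∀ z : K.dimFaces (0 - 1) →₀ 𝕜,
      Finsupp.linearCombination 𝕜 (fun _ => Finsupp.single E (1 : 𝕜)) z = z := fun z => by
    rw [← LinearMap.id_apply (R := 𝕜) z]
    congr 1
    exact Finsupp.lhom_ext fun E' c => by simp [Subsingleton.elim E' E]
  refine Finsupp.lhom_ext fun F c => ?_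
  obtain ⟨x, hx⟩ := Finset.card_eq_one.mp (by have := F.2.2; omega : F.1.card = 1)
  rw [← hid (chainBoundary K 𝕜 0 _),
    K.linearCombination_chainBoundary_single (fun _ => Finsupp.single E (1 : 𝕜)), hx]
  simp [Finset.filter_singleton]

theorem linearCombination_comp_chainBoundary_one (g : Finset V → 𝕜)
    (hg : ∀ a b, ({a, b} : Finset V) ∈ K.faces → g {a} = g {b}) :
    (Finsupp.linearCombination 𝕜 fun E : K.dimFaces 0 => g E.1) ∘ₗ chainBoundary K 𝕜 (0 + 1) =
      0 := by
  refine Finsupp.lhom_ext fun F c => ?_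
  obtain ⟨a, b, hab, hF⟩ : ∃ a b, a < b ∧ F.1 = {a, b} := by
    obtain ⟨a, b, hne, hF⟩ := Finset.card_eq_two.mp (by have := F.2.2; omega : F.1.card = 2)
    rcases hne.lt_or_gt with h | h
    · exact ⟨a, b, h, hF⟩
    · exact ⟨b, a, h, hF.trans (Finset.pair_comm a b)⟩
  have hface : ({a, b} : Finset V) ∈ K.faces := hF ▸ F.2.1
  refine (K.linearCombination_chainBoundary_single g F c).trans ?_
  rw [hF, Finset.sum_pair_neg_one_pow_smul hab,
    Finset.erase_insert (by simpa using hab.ne), Finset.pair_comm,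
    Finset.erase_insert (by simpa using hab.ne'), hg a b hface]
  simp

theorem homDim_eq_zero_of_lt_neg_one {d : ℤ} (hd : d < -1) : K.homDim 𝕜 d = 0 := by
  have := K.isEmpty_dimFaces_of_lt_neg_one hd
  rw [AbsCx.homDim, Module.finrank_zero_of_subsingleton, Nat.zero_sub]

theorem homDim_zero_pos_of_edge_closed [Finite V] (C : Set V)
    (hC : ∀ a b, ({a, b} : Finset V) ∈ K.faces → (a ∈ C ↔ b ∈ C)) {u v : V}
    (hu : {u} ∈ K.faces) (hv : {v} ∈ K.faces) (huC : u ∈ C) (hvC : v ∉ C) :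
    0 < K.homDim 𝕜 0 := by
  classical
  let E : K.dimFaces (0 - 1) := ⟨∅, K.down_closed hu (Finset.empty_subset _), by simp⟩
  let Fu : K.dimFaces 0 := ⟨{u}, hu, by simp⟩
  let Fv : K.dimFaces 0 := ⟨{v}, hv, by simp⟩
  let ε := Finsupp.linearCombination 𝕜 fun _ : K.dimFaces 0 => (1 : 𝕜)
  -- `φ` sums the coefficients on `C`; it kills boundaries since `C` is closed along edges,
  -- but not the cycle `{u} - {v}`.
  let g : Finset V → 𝕜 := fun s => if ↑s ⊆ C then 1 else 0
  let φ := Finsupp.linearCombination 𝕜 fun F : K.dimFaces 0 => g F.1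
  have hcycles : LinearMap.ker ε ≤ LinearMap.ker (chainBoundary K 𝕜 0) := fun x hx => by
    rw [LinearMap.mem_ker] at hx ⊢
    rw [K.chainBoundary_zero_eq_smulRight E, LinearMap.smulRight_apply, hx, zero_smul]
  have hboundaries : LinearMap.range (chainBoundary K 𝕜 (0 + 1)) ≤
      LinearMap.ker ε ⊓ LinearMap.ker φ :=
    le_inf
      (LinearMap.range_le_ker_iff.mpr <|
        K.linearCombination_comp_chainBoundary_one (fun _ => 1) fun _ _ _ => rfl)
      (LinearMap.range_le_ker_iff.mpr <|
        K.linearCombination_comp_chainBoundary_one g fun a b h => by simp [g, hC a b h])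
  have hproper : LinearMap.ker ε ⊓ LinearMap.ker φ < LinearMap.ker ε := by
    refine inf_lt_left.mpr fun hle => ?_
    have hζ : Finsupp.single Fu 1 - Finsupp.single Fv 1 ∈ LinearMap.ker ε := by simp [ε]
    have hφζ : φ (Finsupp.single Fu 1 - Finsupp.single Fv 1) = 1 := by
      rw [map_sub, Finsupp.linearCombination_single, Finsupp.linearCombination_single]
      simp [g, Fu, Fv, huC, hvC]
    exact one_ne_zero (hφζ.symm.trans (hle hζ))
  exact Nat.sub_pos_of_lt <|
    Submodule.finrank_lt_finrank_of_lt ((hboundaries.trans_lt hproper).trans_le hcycles)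

end AbsCx

theorem homDim_zero_restrict_cliqueComplex_pos {V : Type*} [LinearOrder V] [Finite V]
    (𝕜 : Type*) [Field 𝕜] (G : SimpleGraph V) {W : Set V} {u v : V} (hu : u ∈ W) (hv : v ∈ W)
    (huv : ¬ (G.induce W).Reachable ⟨u, hu⟩ ⟨v, hv⟩) :
    0 < ((cliqueComplex G).restrict W).homDim 𝕜 0 := by
  have hvertex : ∀ x ∈ W, {x} ∈ ((cliqueComplex G).restrict W).faces := fun x hx =>
    ⟨by simp [cliqueComplex], by simpa using hx⟩
  refine AbsCx.homDim_zero_pos_of_edge_closed _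
    {x | ∃ hx : x ∈ W, (G.induce W).Reachable ⟨u, hu⟩ ⟨x, hx⟩}
    (fun a b ⟨hclique, hsub⟩ => ?_) (hvertex u hu) (hvertex v hv) ⟨hu, .rfl⟩
    fun ⟨_, h⟩ => huv h
  obtain rfl | hab := eq_or_ne a b
  · rfl
  have ha : a ∈ W := hsub (by simp)
  have hb : b ∈ W := hsub (by simp)
  have hadj : (G.induce W).Adj ⟨a, ha⟩ ⟨b, hb⟩ := hclique (by simp) (by simp) hab
  exact ⟨fun ⟨_, h⟩ => ⟨hb, h.trans hadj.reachable⟩,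
    fun ⟨_, h⟩ => ⟨ha, h.trans hadj.symm.reachable⟩⟩

theorem not_kConnected_connectivityNum_add_one {V : Type*} [Fintype V] (G : SimpleGraph V) :
    ¬ KConnected G (connectivityNum G + 1) := fun h =>
  (connectivityNum G).lt_irrefl <| le_csSup ⟨Fintype.card V, fun _ hk => hk.1⟩ h

theorem exists_separator_card_le_connectivityNum {V : Type*} [Fintype V] (G : SimpleGraph V)
    (hG : connectivityNum G + 1 ≤ Fintype.card V) :
    ∃ s : Finset V, #s ≤ connectivityNum G ∧ ∃ (u v : V) (hu : u ∈ (↑s : Set V)ᶜ)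
      (hv : v ∈ (↑s : Set V)ᶜ), ¬ (G.induce (↑s : Set V)ᶜ).Reachable ⟨u, hu⟩ ⟨v, hv⟩ := by
  obtain ⟨s, hs, hdisconn⟩ : ∃ s : Finset V, #s < connectivityNum G + 1 ∧
      ¬ (G.induce (↑s : Set V)ᶜ).Connected := by
    simpa [KConnected, hG] using not_kConnected_connectivityNum_add_one G
  obtain ⟨u, hu⟩ : ∃ u, u ∉ s := by
    by_contra! h
    have := Finset.card_le_card (fun x _ => h x : (Finset.univ : Finset V) ⊆ s)
    rw [Finset.card_univ] at this
    omega
  have hpre : ¬ (G.induce (↑s : Set V)ᶜ).Preconnected := fun hpre =>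
    hdisconn ((SimpleGraph.connected_iff _).mpr ⟨hpre, ⟨u, by simpa using hu⟩⟩)
  simp only [SimpleGraph.Preconnected, not_forall] at hpre
  obtain ⟨⟨u', hu'⟩, ⟨v', hv'⟩, h⟩ := hpre
  exact ⟨s, by omega, u', v', hu', hv', h⟩

theorem srBetti_eq_zero_of_lt {𝕜 : Type*} [Field 𝕜] {n : ℕ} (K : AbsCx (Fin n)) {i : ℕ}
    (j : ℕ) (hi : n < i) : srBetti 𝕜 K i j = 0 :=
  Finset.sum_eq_zero fun W hW => by
    have := (Finset.mem_powersetCard.mp hW).2 ▸ Finset.card_le_univ W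
    rw [Fintype.card_fin] at this
    exact AbsCx.homDim_eq_zero_of_lt_neg_one _ (by omega)

theorem srDepth_le_of_homDim_restrict_pos {𝕜 : Type*} [Field 𝕜] {n : ℕ} (K : AbsCx (Fin n))
    (W : Finset (Fin n)) (i : ℕ) (h : 0 < (K.restrict W).homDim 𝕜 (#W - i - 1)) :
    srDepth 𝕜 K ≤ n - i := by
  have hbetti : srBetti 𝕜 K i #W ≠ 0 := fun h0 =>
    h.ne' <| (Finset.sum_eq_zero_iff.mp h0) W (Finset.mem_powersetCard.mpr ⟨W.subset_univ, rfl⟩)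
  have hbdd : BddAbove {i : ℕ | ∃ j, srBetti 𝕜 K i j ≠ 0} :=
    ⟨n, fun i ⟨j, hij⟩ => not_lt.mp fun hi => hij (srBetti_eq_zero_of_lt K j hi)⟩
  exact Nat.sub_le_sub_left (le_csSup hbdd ⟨_, hbetti⟩) n

theorem srDepth_le_connectivity_general (𝕜 : Type*) [Field 𝕜] {n : ℕ}
    (G : SimpleGraph (Fin n)) :
    srDepth 𝕜 (cliqueComplex G) ≤ connectivityNum G + 1 := by
  by_cases hn : n ≤ connectivityNum G + 1
  · exact (Nat.sub_le n _).trans hn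
  obtain ⟨s, hs, u, v, hu, hv, huv⟩ :=
    exists_separator_card_le_connectivityNum G (by rw [Fintype.card_fin]; omega)
  have hH₀ : 0 < ((cliqueComplex G).restrict ↑sᶜ).homDim 𝕜 0 := by
    rw [Finset.coe_compl]
    exact homDim_zero_restrict_cliqueComplex_pos 𝕜 G hu hv huv
  have hcard : #sᶜ = n - #s := by rw [Finset.card_compl, Fintype.card_fin]
  have hdepth := srDepth_le_of_homDim_restrict_pos (cliqueComplex G) sᶜ (#sᶜ - 1)
    (by rwa [show (#sᶜ : ℤ) - ↑(#sᶜ - 1) - 1 = 0 by omega])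
  omega

/-- `depth 𝕜[Δ(G)] ≤ κ(G) + 1`. -/
theorem srDepth_le_connectivity (𝕜 : Type*) [Field 𝕜] [CharZero 𝕜] {n : ℕ}
    (G : SimpleGraph (Fin n)) :
    srDepth 𝕜 (cliqueComplex G) ≤ connectivityNum G + 1 :=
  srDepth_le_connectivity_general 𝕜 G
end
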